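/- arXiv:2208.11291 — 3 statements merged into one kernel-verified Lean document; each statement's English description precedes it below -/
import Mathlib

section
/- For any real number z, both roots λ of the quadratic equation (1 + z²)λ² − 2λ + 1 = 0 satisfy |λ| ≤ 1. -/
/-!
Dividing by `λ²` turns the equation into `(λ⁻¹ - 1)² = -z²`, so `λ⁻¹ - 1 = ±iz` is purely
imaginary. Hence `Re λ⁻¹ = 1`, which forces `‖λ⁻¹‖ ≥ 1`.
-/

theorem inv_sub_one_sq_eq_of_quadratic_eq_zero {K : Type*} [Field K] {a x : K}
    (h : a * x ^ 2 - 2 * x + 1 = 0) : (x⁻¹ - 1) ^ 2 = 1 - a := by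
  have hx : x ≠ 0 := by
    rintro rfl
    simp at h
  field_simp
  linear_combination h

theorem Complex.re_eq_zero_of_sq_eq_neg_sq {w : ℂ} {t : ℝ} (h : w ^ 2 = -(t : ℂ) ^ 2) :
    w.re = 0 := by
  have hfactor : (w - t * I) * (w + t * I) = 0 := by
    linear_combination h - (t : ℂ) ^ 2 * I_sq
  rcases mul_eq_zero.mp hfactor with hw | hw
  · simp [sub_eq_zero.mp hw]
  · simp [add_eq_zero_iff_eq_neg.mp hw]

/-- For any real number `z`, both roots `λ` of the quadratic equation
`(1 + z²)λ² − 2λ + 1 = 0` satisfy `|λ| ≤ 1`. -/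
theorem stability_roots_modulus_le_one (z : ℝ) (lam : ℂ)
    (hroot : (1 + (z : ℂ) ^ 2) * lam ^ 2 - 2 * lam + 1 = 0) :
    ‖lam‖ ≤ 1 := by
  have hsq : (lam⁻¹ - 1) ^ 2 = -(z : ℂ) ^ 2 := by
    rw [inv_sub_one_sq_eq_of_quadratic_eq_zero hroot]
    ring
  have hre : lam⁻¹.re = 1 := by
    simpa [sub_eq_zero] using Complex.re_eq_zero_of_sq_eq_neg_sq hsq
  calc ‖lam‖ = ‖lam⁻¹‖⁻¹ := by rw [norm_inv, inv_inv]
    _ ≤ 1 := inv_le_one_of_one_le₀ (hre ▸ Complex.re_le_norm lam⁻¹)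
end

section
/- Suppose ψⁿ, Aⁿ solve the semi-discrete Lorenz-gauge system ℒψⁿ⁺¹ = 2ψⁿ − ψⁿ⁻¹ + (1/(α²ε₀))ρⁿ⁺¹ and ℒAⁿ⁺¹ = 2Aⁿ − Aⁿ⁻¹ + (μ₀/α²)Jⁿ⁺¹, with ℒ = I − α⁻²Δ invertible and commuting with ∇·. Define the gauge residual εⁿ = (ψⁿ − ψⁿ⁻¹)/(c²Δt) + ∇·Aⁿ, where c² = 1/(μ₀ε₀) and α = 1/(cΔt). Then εⁿ⁺¹ = ℒ⁻¹( 2εⁿ − εⁿ⁻¹ + (μ₀/α²)( (ρⁿ⁺¹ − ρⁿ)/Δt + ∇·Jⁿ⁺¹ ) ). -/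
/-!
The scheme `L xⁿ⁺¹ = 2xⁿ − xⁿ⁻¹ + sⁿ⁺¹` is linear in the pair `(x, s)`, commutes with the
backward difference in time, and is transported by any linear map intertwining the operators.
The residual `εⁿ` is built from `ψ` and `A` by exactly these operations (a scaled backward
difference of `ψ` plus the divergence of `A`), so it solves the same scheme with the
correspondingly transformed source. The relation `c²μ₀ε₀ = 1` turns the coefficient
`1/(c²Δt α²ε₀)` of `ρⁿ⁺¹ − ρⁿ` into `μ₀/(α²Δt)`.
-/

namespace SemiDiscreteWave

variable {R M N : Type*} [CommRing R] [AddCommGroup M] [Module R M] [AddCommGroup N] [Module R N]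

def Solves (L : M →ₗ[R] M) (x s : ℤ → M) : Prop :=
  ∀ n : ℤ, L (x (n + 1)) = (2 : R) • x n - x (n - 1) + s (n + 1)

variable {L : M →ₗ[R] M} {x y s t : ℤ → M}

theorem Solves.add (hx : Solves L x s) (hy : Solves L y t) :
    Solves L (fun n => x n + y n) (fun n => s n + t n) := by
  intro n
  dsimp only
  rw [map_add, hx n, hy n, smul_add]
  abel

theorem Solves.smul (hx : Solves L x s) (a : R) :
    Solves L (fun n => a • x n) (fun n => a • s n) := by
  intro n
  rw [map_smul, hx n, smul_add, smul_sub, smul_comm a (2 : R)]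

theorem Solves.sub_shift (hx : Solves L x s) :
    Solves L (fun n => x n - x (n - 1)) (fun n => s n - s (n - 1)) := by
  intro n
  have hprev := hx (n - 1)
  rw [sub_add_cancel] at hprev
  dsimp only
  rw [map_sub, add_sub_cancel_right, hx n, hprev, smul_sub]
  abel

theorem Solves.map {L' : N →ₗ[R] N} (f : M →ₗ[R] N) (hf : ∀ m, f (L m) = L' (f m))
    (hx : Solves L x s) : Solves L' (fun n => f (x n)) (fun n => f (s n)) := by
  intro n
  rw [← hf, hx n, map_add, map_sub, map_smul]

end SemiDiscreteWave

open SemiDiscreteWave in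
theorem semiDiscrete_gauge_residual_recursion_general
    {V W : Type*} [AddCommGroup V] [Module ℝ V] [AddCommGroup W] [Module ℝ W]
    (L : V ≃ₗ[ℝ] V) (LW : W ≃ₗ[ℝ] W) (dvg : W →ₗ[ℝ] V)
    (hcomm : ∀ w : W, dvg (LW w) = L (dvg w))
    (c Δt α ε₀ μ₀ : ℝ)
    (hlight : c ^ 2 * μ₀ * ε₀ = 1)
    (ψ ρ : ℤ → V) (A J : ℤ → W)
    (hψ : ∀ n : ℤ, L (ψ (n + 1)) =
      (2 : ℝ) • ψ n - ψ (n - 1) + (1 / (α ^ 2 * ε₀)) • ρ (n + 1))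
    (hA : ∀ n : ℤ, LW (A (n + 1)) =
      (2 : ℝ) • A n - A (n - 1) + (μ₀ / α ^ 2) • J (n + 1))
    (ε : ℤ → V)
    (hε : ∀ n : ℤ, ε n = (1 / (c ^ 2 * Δt)) • (ψ n - ψ (n - 1)) + dvg (A n)) :
    ∀ n : ℤ, ε (n + 1) =
      L.symm ((2 : ℝ) • ε n - ε (n - 1) +
        (μ₀ / α ^ 2) • ((1 / Δt) • (ρ (n + 1) - ρ n) + dvg (J (n + 1)))) := by
  have hψ' : Solves (L : V →ₗ[ℝ] V) ψ (fun n => (1 / (α ^ 2 * ε₀)) • ρ n) := hψ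
  have hA' : Solves (LW : W →ₗ[ℝ] W) A (fun n => (μ₀ / α ^ 2) • J n) := hA
  have hres : Solves (L : V →ₗ[ℝ] V) ε (fun n => (1 / (c ^ 2 * Δt)) •
      ((1 / (α ^ 2 * ε₀)) • ρ n - (1 / (α ^ 2 * ε₀)) • ρ (n - 1)) + dvg ((μ₀ / α ^ 2) • J n)) := by
    rw [show ε = _ from funext hε]
    exact (hψ'.sub_shift.smul _).add (hA'.map dvg hcomm)
  have hcoef : 1 / (c ^ 2 * Δt) * (1 / (α ^ 2 * ε₀)) = μ₀ / α ^ 2 * (1 / Δt) := by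
    have hμ₀ : μ₀ = (c ^ 2 * ε₀)⁻¹ := eq_inv_of_mul_eq_one_left (by linear_combination hlight)
    rw [hμ₀]
    ring
  intro n
  rw [LinearEquiv.eq_symm_apply]
  refine (hres n).trans (congrArg _ ?_)
  dsimp only
  rw [add_sub_cancel_right, ← smul_sub, smul_smul, hcoef, map_smul, ← smul_smul, ← smul_add]

/-- Residual recursion for the semi-discrete Lorenz gauge condition.  Here `V` is a space
of scalar fields, `W` a space of vector fields, `L` (resp. `LW`) the invertible modified
Helmholtz operator on scalar (resp. vector) fields, and `dvg` the divergence operator,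
which commutes with `L`.  If `ψ, A` solve the semi-discrete Lorenz-gauge system, then the
gauge residual `ε n = (ψ n − ψ (n−1))/(c²Δt) + ∇·(A n)` satisfies
`ε (n+1) = L⁻¹(2 ε n − ε (n−1) + (μ₀/α²)((ρ (n+1) − ρ n)/Δt + ∇·(J (n+1))))`. -/
theorem semiDiscrete_gauge_residual_recursion
    {V W : Type*} [AddCommGroup V] [Module ℝ V] [AddCommGroup W] [Module ℝ W]
    (L : V ≃ₗ[ℝ] V) (LW : W ≃ₗ[ℝ] W) (dvg : W →ₗ[ℝ] V)
    (hcomm : ∀ w : W, dvg (LW w) = L (dvg w))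
    (c Δt α ε₀ μ₀ : ℝ)
    (hc : 0 < c) (hΔt : 0 < Δt) (hα : 0 < α) (hε₀ : 0 < ε₀) (hμ₀ : 0 < μ₀)
    (hlight : c ^ 2 * μ₀ * ε₀ = 1) (hαdef : α * (c * Δt) = 1)
    (ψ ρ : ℤ → V) (A J : ℤ → W)
    (hψ : ∀ n : ℤ, L (ψ (n + 1)) =
      (2 : ℝ) • ψ n - ψ (n - 1) + (1 / (α ^ 2 * ε₀)) • ρ (n + 1))
    (hA : ∀ n : ℤ, LW (A (n + 1)) =
      (2 : ℝ) • A n - A (n - 1) + (μ₀ / α ^ 2) • J (n + 1))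
    (ε : ℤ → V)
    (hε : ∀ n : ℤ, ε n = (1 / (c ^ 2 * Δt)) • (ψ n - ψ (n - 1)) + dvg (A n)) :
    ∀ n : ℤ, ε (n + 1) =
      L.symm ((2 : ℝ) • ε n - ε (n - 1) +
        (μ₀ / α ^ 2) • ((1 / Δt) • (ρ (n + 1) - ρ n) + dvg (J (n + 1)))) :=
  semiDiscrete_gauge_residual_recursion_general L LW dvg hcomm c Δt α ε₀ μ₀ hlight ψ ρ A J hψ hA ε
    hε
end

section
/- The free-space one-dimensional solution formula satisfies: if w(x) = (α/2)∫ₐᵇ e^{−α|x−y|} f(y) dy with f twice continuously differentiable extended continuously, then for x in (a,b), w(x) − (1/α²) w''(x) = f(x). -/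
/-!
Splitting the kernel at `y = x` writes `w = (Iᴸ[f] + Iᴿ[f]) / 2`, where `Iᴸ` and `Iᴿ` integrate
`f` against the decaying exponential from the left and from the right. By the fundamental theorem
of calculus `Iᴸ' = α (f - Iᴸ)` and `Iᴿ' = α (Iᴿ - f)`, so `w' = (α / 2) (Iᴿ - Iᴸ)` and
`w'' = α² w - α² f`.
-/

open Real Filter Topology

namespace ModifiedHelmholtz

/- `Iᴸ[f](x) = α ∫ₐˣ e^{−α(x−y)} f(y) dy` and `Iᴿ[f](x) = α ∫ₓᵇ e^{−α(y−x)} f(y) dy`, with the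
dependence on `x` pulled out of the integrand so that the fundamental theorem of calculus applies. -/
noncomputable def dampedIntegralLeft (α a : ℝ) (f : ℝ → ℝ) (x : ℝ) : ℝ :=
  α * exp (-α * x) * ∫ y in a..x, exp (α * y) * f y

noncomputable def dampedIntegralRight (α b : ℝ) (f : ℝ → ℝ) (x : ℝ) : ℝ :=
  α * exp (α * x) * ∫ y in x..b, exp (-α * y) * f y

noncomputable def freeSpaceSolution (α a b : ℝ) (f : ℝ → ℝ) (x : ℝ) : ℝ :=
  (dampedIntegralLeft α a f x + dampedIntegralRight α b f x) / 2

variable {α a b : ℝ} {f : ℝ → ℝ}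

lemma hasDerivAt_dampedIntegralLeft (hf : Continuous f) (x : ℝ) :
    HasDerivAt (dampedIntegralLeft α a f) (α * (f x - dampedIntegralLeft α a f x)) x := by
  have hg : Continuous fun y => exp (α * y) * f y := by fun_prop
  have hint : HasDerivAt (fun x => ∫ y in a..x, exp (α * y) * f y) (exp (α * x) * f x) x :=
    intervalIntegral.integral_hasDerivAt_right (hg.intervalIntegrable _ _)
      (hg.stronglyMeasurableAtFilter _ _) hg.continuousAt
  have hexp : HasDerivAt (fun x => α * exp (-α * x)) (α * (exp (-α * x) * (-α))) x := by
    simpa using (((hasDerivAt_id x).const_mul (-α)).exp).const_mul α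
  refine (hexp.mul hint).congr_deriv ?_
  have hcancel : exp (-α * x) * exp (α * x) = 1 := by rw [← exp_add]; simp
  unfold dampedIntegralLeft
  linear_combination α * f x * hcancel

lemma hasDerivAt_dampedIntegralRight (hf : Continuous f) (x : ℝ) :
    HasDerivAt (dampedIntegralRight α b f) (α * (dampedIntegralRight α b f x - f x)) x := by
  have hg : Continuous fun y => exp (-α * y) * f y := by fun_prop
  have hint : HasDerivAt (fun x => ∫ y in x..b, exp (-α * y) * f y) (-(exp (-α * x) * f x)) x :=
    intervalIntegral.integral_hasDerivAt_left (hg.intervalIntegrable _ _)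
      (hg.stronglyMeasurableAtFilter _ _) hg.continuousAt
  have hexp : HasDerivAt (fun x => α * exp (α * x)) (α * (exp (α * x) * α)) x := by
    simpa using (((hasDerivAt_id x).const_mul α).exp).const_mul α
  refine (hexp.mul hint).congr_deriv ?_
  have hcancel : exp (α * x) * exp (-α * x) = 1 := by rw [← exp_add]; simp
  unfold dampedIntegralRight
  linear_combination -α * f x * hcancel

lemma integral_exp_neg_abs_mul_eq (hf : Continuous f) {x : ℝ} (hax : a ≤ x) (hxb : x ≤ b) :
    α * ∫ y in a..b, exp (-α * |x - y|) * f y =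
      dampedIntegralLeft α a f x + dampedIntegralRight α b f x := by
  have hk : Continuous fun y => exp (-α * |x - y|) * f y := by fun_prop
  have hleft : ∫ y in a..x, exp (-α * |x - y|) * f y =
      exp (-α * x) * ∫ y in a..x, exp (α * y) * f y := by
    rw [← intervalIntegral.integral_const_mul]
    refine intervalIntegral.integral_congr fun y hy => ?_
    rw [Set.uIcc_of_le hax] at hy
    simp only [abs_of_nonneg (sub_nonneg.mpr hy.2), ← mul_assoc, ← exp_add]
    ring_nf
  have hright : ∫ y in x..b, exp (-α * |x - y|) * f y =
      exp (α * x) * ∫ y in x..b, exp (-α * y) * f y := by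
    rw [← intervalIntegral.integral_const_mul]
    refine intervalIntegral.integral_congr fun y hy => ?_
    rw [Set.uIcc_of_le hxb] at hy
    simp only [abs_sub_comm x y, abs_of_nonneg (sub_nonneg.mpr hy.1), ← mul_assoc, ← exp_add]
    ring_nf
  rw [← intervalIntegral.integral_add_adjacent_intervals (b := x) (hk.intervalIntegrable _ _)
    (hk.intervalIntegrable _ _), hleft, hright, dampedIntegralLeft, dampedIntegralRight]
  ring

lemma deriv_freeSpaceSolution (hf : Continuous f) :
    deriv (freeSpaceSolution α a b f) =
      fun x => α / 2 * (dampedIntegralRight α b f x - dampedIntegralLeft α a f x) :=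
  funext fun x =>
    (((hasDerivAt_dampedIntegralLeft hf x).add (hasDerivAt_dampedIntegralRight hf x)).div_const
      2).deriv.trans (by ring)

lemma deriv_deriv_freeSpaceSolution (hf : Continuous f) (x : ℝ) :
    deriv (deriv (freeSpaceSolution α a b f)) x =
      α ^ 2 * freeSpaceSolution α a b f x - α ^ 2 * f x := by
  rw [deriv_freeSpaceSolution hf, freeSpaceSolution]
  exact (((hasDerivAt_dampedIntegralRight hf x).sub
    (hasDerivAt_dampedIntegralLeft hf x)).const_mul (α / 2)).deriv.trans (by ring)

end ModifiedHelmholtz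

open ModifiedHelmholtz in
theorem free_space_solution_modified_helmholtz_general (α a b : ℝ) (hα : 0 < α)
    (f : ℝ → ℝ) (hf : ContDiff ℝ 2 f)
    (w : ℝ → ℝ)
    (hw : ∀ x, w x = (α / 2) * ∫ y in a..b, Real.exp (-α * |x - y|) * f y) :
    ∀ x ∈ Set.Ioo a b, w x - (1 / α ^ 2) * deriv (deriv w) x = f x := by
  intro x hx
  have hwv : ∀ z ∈ Set.Ioo a b, w z = freeSpaceSolution α a b f z := fun z hz => by
    rw [hw z, freeSpaceSolution, ← integral_exp_neg_abs_mul_eq hf.continuous hz.1.le hz.2.le]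
    ring
  have hwv_nhds : w =ᶠ[𝓝 x] freeSpaceSolution α a b f :=
    eventually_of_mem (isOpen_Ioo.mem_nhds hx) hwv
  rw [hwv x hx, hwv_nhds.deriv.deriv_eq, deriv_deriv_freeSpaceSolution hf.continuous x]
  field_simp
  ring

/-- The free-space one-dimensional integral solution is a particular solution of the
modified Helmholtz equation: if `w(x) = (α/2)∫ₐᵇ e^{−α|x−y|} f(y) dy` with `f` twice
continuously differentiable, then for all `x ∈ (a,b)`,
`w(x) − (1/α²) w''(x) = f(x)`. -/
theorem free_space_solution_modified_helmholtz (α a b : ℝ) (hα : 0 < α) (hab : a < b)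
    (f : ℝ → ℝ) (hf : ContDiff ℝ 2 f)
    (w : ℝ → ℝ)
    (hw : ∀ x, w x = (α / 2) * ∫ y in a..b, Real.exp (-α * |x - y|) * f y) :
    ∀ x ∈ Set.Ioo a b, w x - (1 / α ^ 2) * deriv (deriv w) x = f x :=
  free_space_solution_modified_helmholtz_general α a b hα f hf w hw
end
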